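/- arXiv:1610.00585 — 8 statements merged into one kernel-verified Lean document; each statement's English description precedes it below -/
import Mathlib

section
/- Suppose c > γ. Let z ≥ 1 be the maximum number of suppliers simultaneously at one table over a feasible schedule, and let y_k be the number of dinners attended by customer k. Then Σ_k y_k ≥ max( cs/z, min_{1≤x≤γ} ((c−x)z + xs/z) ). -/
/-- A schedule of `d` dinners for the Business Dinner Problem with `t` tables,
`s` suppliers, `c` customers, at most `σ` suppliers and at most `γ` customers
per table. `supSeat e i = some tb` means supplier `i` sits at table `tb` at
dinner `e` (and `none` means the supplier skips the dinner); similarly for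
customers. -/
structure BDSchedule (t s c σ γ d : ℕ) where
  supSeat : Fin d → Fin s → Option (Fin t)
  cusSeat : Fin d → Fin c → Option (Fin t)
  /-- at most `σ` suppliers at each table at each dinner -/
  supCap : ∀ (e : Fin d) (tb : Fin t),
    (Finset.univ.filter fun i : Fin s => supSeat e i = some tb).card ≤ σ
  /-- at most `γ` customers at each table at each dinner -/
  cusCap : ∀ (e : Fin d) (tb : Fin t),
    (Finset.univ.filter fun k : Fin c => cusSeat e k = some tb).card ≤ γ
  /-- every supplier and customer share a table at exactly one dinner -/
  meetOnce : ∀ (i : Fin s) (k : Fin c), ∃! e : Fin d,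
    ∃ tb : Fin t, supSeat e i = some tb ∧ cusSeat e k = some tb
  /-- two distinct suppliers share a table at no more than one dinner -/
  supPairOnce : ∀ i j : Fin s, i ≠ j →
    (Finset.univ.filter fun e : Fin d =>
      ∃ tb : Fin t, supSeat e i = some tb ∧ supSeat e j = some tb).card ≤ 1

/-- The counting argument: if `z ≥ 1` is the maximum number of suppliers
simultaneously at one table over a feasible schedule, and `y k` is the number of
dinners attended by customer `k`, then
`Σ_k y_k ≥ max(cs/z, min_{1 ≤ x ≤ γ} ((c-x)z + xs/z))`. -/
theorem business_dinner_counting (t s c σ γ d z : ℕ) (hγ : 1 ≤ γ) (hcγ : γ < c) (hz : 1 ≤ z)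
    (sch : BDSchedule t s c σ γ d)
    (hzmax : IsGreatest {n : ℕ | ∃ (e : Fin d) (tb : Fin t),
      (Finset.univ.filter fun i : Fin s => sch.supSeat e i = some tb).card = n} z) :
    max ((c : ℝ) * s / z)
        ((Finset.Icc 1 γ).inf' (Finset.nonempty_Icc.2 hγ)
          (fun x : ℕ => ((c : ℝ) - x) * z + (x : ℝ) * s / z))
      ≤ ∑ k : Fin c,
          ((Finset.univ.filter fun e : Fin d => sch.cusSeat e k ≠ none).card : ℝ) := by
  classical
  set y : Fin c → ℕ := fun k => (Finset.univ.filter fun e : Fin d => sch.cusSeat e k ≠ none).card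
    with hy
  have hzub : ∀ (e : Fin d) (tb : Fin t),
      (Finset.univ.filter fun i : Fin s => sch.supSeat e i = some tb).card ≤ z :=
    fun e tb => hzmax.2 ⟨e, tb, rfl⟩
  -- Lemma A : each customer meets at most z suppliers per dinner
  have hA : ∀ k : Fin c, s ≤ z * y k := by
    intro k
    choose f hf using fun i : Fin s => (sch.meetOnce i k).exists
    have h1 : (Finset.univ : Finset (Fin s)).card ≤ z * (Finset.univ.image f).card := by
      apply Finset.card_le_mul_card_image
      intro e he
      obtain ⟨i0, -, hi0⟩ := Finset.mem_image.1 he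
      obtain ⟨tb0, hsi0, hck0⟩ := hf i0
      rw [hi0] at hck0
      refine le_trans (Finset.card_le_card ?_) (hzub e tb0)
      intro i hi
      simp only [Finset.mem_filter, Finset.mem_univ, true_and] at hi ⊢
      obtain ⟨tb1, hsi, hck⟩ := hf i
      rw [hi] at hsi hck
      rw [hck0] at hck
      rw [hsi, Option.some_inj.1 hck]
    have h2 : (Finset.univ.image f).card ≤ y k := by
      apply Finset.card_le_card
      intro e he
      obtain ⟨i0, -, hi0⟩ := Finset.mem_image.1 he
      obtain ⟨tb0, -, hck0⟩ := hf i0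
      rw [hi0] at hck0
      simp only [hy, Finset.mem_filter, Finset.mem_univ, true_and, hck0]
      simp
    calc s = (Finset.univ : Finset (Fin s)).card := by simp
      _ ≤ z * (Finset.univ.image f).card := h1
      _ ≤ z * y k := Nat.mul_le_mul_left z h2
  -- extremal dinner/table
  obtain ⟨e0, tb0, hS0⟩ := hzmax.1
  set X : Finset (Fin c) := Finset.univ.filter fun k => sch.cusSeat e0 k = some tb0 with hX
  have hXγ : X.card ≤ γ := sch.cusCap e0 tb0
  -- Lemma C : customers outside X attend at least z dinners
  have hC : ∀ k : Fin c, k ∉ X → z ≤ y k := by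
    intro k hk
    choose f hf using fun i : Fin s => (sch.meetOnce i k).exists
    set S0 : Finset (Fin s) := Finset.univ.filter fun i => sch.supSeat e0 i = some tb0 with hS0d
    have hmaps : ∀ i ∈ S0, f i ∈ Finset.univ.filter fun e : Fin d => sch.cusSeat e k ≠ none := by
      intro i hi
      obtain ⟨tb1, -, hck⟩ := hf i
      simp [Finset.mem_filter, hck]
    have hinj : Set.InjOn f ↑S0 := by
      intro i hi j hj hij
      by_contra hne
      simp only [hS0d, Finset.coe_filter, Set.mem_setOf_eq] at hi hj
      obtain ⟨tb1, hsi, hck1⟩ := hf i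
      obtain ⟨tb2, hsj, hck2⟩ := hf j
      rw [hij] at hsi hck1
      have htb : tb1 = tb2 := Option.some_inj.1 (hck1 ▸ hck2 ▸ rfl)
      -- f j ≠ e0
      have hne0 : f j ≠ e0 := by
        intro h
        rw [h] at hsj hck2
        rw [hj.2] at hsj
        apply hk
        simp only [hX, Finset.mem_filter, Finset.mem_univ, true_and]
        rw [hck2, ← Option.some_inj.1 hsj]
      have hsub : ({e0, f j} : Finset (Fin d)) ⊆ Finset.univ.filter fun e : Fin d =>
          ∃ tb : Fin t, sch.supSeat e i = some tb ∧ sch.supSeat e j = some tb := by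
        intro e he
        simp only [Finset.mem_insert, Finset.mem_singleton] at he
        rcases he with rfl | rfl
        · exact Finset.mem_filter.2 ⟨Finset.mem_univ _, ⟨tb0, hi.2, hj.2⟩⟩
        · exact Finset.mem_filter.2 ⟨Finset.mem_univ _, ⟨tb1, hsi, htb ▸ hsj⟩⟩
      have h2 : 2 ≤ (Finset.univ.filter fun e : Fin d =>
          ∃ tb : Fin t, sch.supSeat e i = some tb ∧ sch.supSeat e j = some tb).card := by
        refine le_trans ?_ (Finset.card_le_card hsub)
        rw [Finset.card_insert_of_notMem (by simpa using (Ne.symm hne0)), Finset.card_singleton]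
      have := sch.supPairOnce i j hne
      omega
    calc z = S0.card := hS0.symm
      _ ≤ y k := Finset.card_le_card_of_injOn f hmaps hinj
  -- choose the set X' (X if nonempty, else a singleton)
  have hc0 : 0 < c := lt_of_le_of_lt (Nat.zero_le γ) hcγ
  set k0 : Fin c := ⟨0, hc0⟩ with hk0
  set X' : Finset (Fin c) := if X.Nonempty then X else {k0} with hX'
  have hx'1 : 1 ≤ X'.card := by
    by_cases h : X.Nonempty
    · simp only [hX', if_pos h]; exact Finset.card_pos.2 h
    · simp [hX', if_neg h]
  have hx'γ : X'.card ≤ γ := by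
    by_cases h : X.Nonempty
    · simp only [hX', if_pos h]; exact hXγ
    · simp only [hX', if_neg h, Finset.card_singleton]; exact hγ
  have hC' : ∀ k : Fin c, k ∉ X' → z ≤ y k := by
    intro k hk
    by_cases h : X.Nonempty
    · exact hC k (by simpa only [hX', if_pos h] using hk)
    · exact hC k (by simp [Finset.not_nonempty_iff_eq_empty.1 h])
  -- real arithmetic
  have hz0 : (0 : ℝ) < z := by exact_mod_cast hz
  have hsz : ∀ k : Fin c, (s : ℝ) / z ≤ (y k : ℝ) := by
    intro k
    rw [div_le_iff₀ hz0]
    have := hA k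
    have : (s : ℝ) ≤ (z : ℝ) * (y k : ℝ) := by exact_mod_cast this
    linarith
  have hzy : ∀ k : Fin c, k ∉ X' → (z : ℝ) ≤ (y k : ℝ) := fun k hk => by
    exact_mod_cast hC' k hk
  have hgoal : ∑ k : Fin c,
      ((Finset.univ.filter fun e : Fin d => sch.cusSeat e k ≠ none).card : ℝ)
      = ∑ k : Fin c, (y k : ℝ) := rfl
  rw [hgoal, max_le_iff]
  constructor
  · have hsum : ∑ _k : Fin c, (s : ℝ) / z = (c : ℝ) * s / z := by
      rw [Finset.sum_const, Finset.card_univ, Fintype.card_fin, nsmul_eq_mul]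
      ring
    rw [← hsum]
    exact Finset.sum_le_sum fun k _ => hsz k
  · have hmem : X'.card ∈ Finset.Icc 1 γ := Finset.mem_Icc.2 ⟨hx'1, hx'γ⟩
    refine le_trans (Finset.inf'_le _ hmem) ?_
    have hxc : X'.card ≤ c := by
      simpa using Finset.card_le_card (Finset.subset_univ X')
    have hcompl : (X'ᶜ.card : ℝ) = (c : ℝ) - X'.card := by
      rw [Finset.card_compl, Fintype.card_fin]
      push_cast [Nat.cast_sub hxc]
      ring
    have h1 : (X'.card : ℝ) * s / z ≤ ∑ k ∈ X', (y k : ℝ) := by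
      have hsum : ∑ _k ∈ X', (s : ℝ) / z = (X'.card : ℝ) * s / z := by
        rw [Finset.sum_const, nsmul_eq_mul]
        ring
      rw [← hsum]
      exact Finset.sum_le_sum fun k _ => hsz k
    have h2 : ((c : ℝ) - X'.card) * z ≤ ∑ k ∈ X'ᶜ, (y k : ℝ) := by
      have hsum : ∑ _k ∈ X'ᶜ, (z : ℝ) = ((c : ℝ) - X'.card) * z := by
        rw [Finset.sum_const, nsmul_eq_mul, hcompl]
      rw [← hsum]
      exact Finset.sum_le_sum fun k hk => hzy k (Finset.mem_compl.1 hk)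
    calc ((c : ℝ) - X'.card) * z + (X'.card : ℝ) * s / z
        ≤ ∑ k ∈ X'ᶜ, (y k : ℝ) + ∑ k ∈ X', (y k : ℝ) := add_le_add h2 h1
      _ = ∑ k : Fin c, (y k : ℝ) := by rw [add_comm, Finset.sum_add_sum_compl]
end

section
/- If c > γ, the number of dinners in any feasible schedule is at least ⌈ (√s/(tγ)) · ( (c−γ)·max(√(γ/(c−γ)),1) + γ / max(√(γ/(c−γ)),1) ) ⌉. -/
open Real

theorem mul_max_sqrt_add_div_le {x y m : ℝ} (hx : 0 < x) (hy : 0 ≤ y) (hm : 1 ≤ m) :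
    x * max √(y / x) 1 + y / max √(y / x) 1 ≤ x * m + y / m := by
  have hm0 : 0 < m := one_pos.trans_le hm
  rcases le_total √(y / x) 1 with hr | hr
  · rw [max_eq_right hr, mul_one, div_one]
    have hyx : y ≤ x := by
      rwa [sqrt_le_one, div_le_one hx] at hr
    have hym : y / m ≤ x := (div_le_self hy hm).trans hyx
    have : x + y - (x * m + y / m) = -((m - 1) * (x - y / m)) := by
      field_simp; ring
    nlinarith [mul_nonneg (sub_nonneg.2 hm) (sub_nonneg.2 hym)]
  · rw [max_eq_left hr]
    set r := √(y / x)
    have hr0 : 0 < r := one_pos.trans_le hr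
    have hy_eq : y = x * r ^ 2 := by
      rw [sq_sqrt (div_nonneg hy hx.le)]; field_simp
    have : x * m + y / m - (x * r + y / r) = x * (m - r) ^ 2 / m := by
      rw [hy_eq]; field_simp; ring
    have : 0 ≤ x * (m - r) ^ 2 / m := by positivity
    linarith

theorem mul_mul_max_sqrt_add_div_le {x y r b : ℝ} (hx : 0 < x) (hy : 0 ≤ y) (hr : 0 < r)
    (hb : 0 < b) :
    r * (x * max √(y / x) 1 + y / max √(y / x) 1) ≤
      x * max b (r ^ 2 / b) + y * (r ^ 2 / b) := by
  rcases le_total r b with hrb | hbr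
  · have key := mul_max_sqrt_add_div_le hx hy ((one_le_div hr).2 hrb)
    calc r * (x * max √(y / x) 1 + y / max √(y / x) 1)
        ≤ r * (x * (b / r) + y / (b / r)) := mul_le_mul_of_nonneg_left key hr.le
      _ = x * b + y * (r ^ 2 / b) := by field_simp
      _ ≤ _ := by gcongr; exact le_max_left _ _
  · have key := mul_max_sqrt_add_div_le hx hy le_rfl
    have hrb : r ≤ r ^ 2 / b := by rw [le_div_iff₀ hb, sq]; gcongr
    calc r * (x * max √(y / x) 1 + y / max √(y / x) 1)
        ≤ r * (x + y) := by simpa using mul_le_mul_of_nonneg_left key hr.le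
      _ ≤ (r ^ 2 / b) * (x + y) := by gcongr
      _ ≤ _ := by nlinarith [le_max_right b (r ^ 2 / b)]

open Finset

theorem Finset.card_sub_mul_add_mul_le_sum {ι : Type*} [Fintype ι] [DecidableEq ι]
    (K : Finset ι) (f : ι → ℝ) {lo hi g : ℝ} (hlohi : lo ≤ hi) (hK : (#K : ℝ) ≤ g)
    (hlo : ∀ k, lo ≤ f k) (hhi : ∀ k ∉ K, hi ≤ f k) :
    (Fintype.card ι - g) * hi + g * lo ≤ ∑ k, f k := by
  have hin : (#K : ℝ) * lo ≤ ∑ k ∈ K, f k := by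
    simpa using card_nsmul_le_sum K f lo fun k _ => hlo k
  have hout : (#Kᶜ : ℝ) * hi ≤ ∑ k ∈ Kᶜ, f k := by
    simpa using card_nsmul_le_sum Kᶜ f hi fun k hk => hhi k (mem_compl.1 hk)
  rw [← sum_add_sum_compl K, card_compl, Nat.cast_sub (card_le_univ K)] at *
  nlinarith [mul_nonneg (sub_nonneg.2 hK) (sub_nonneg.2 hlohi)]

namespace BDSchedule

variable {t s c σ γ d : ℕ} (S : BDSchedule t s c σ γ d)

def tableSuppliers (e : Fin d) (tb : Fin t) : Finset (Fin s) := {i | S.supSeat e i = some tb}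

def attendance (k : Fin c) : ℕ := #{e | (S.cusSeat e k).isSome}

def maxTableSize : ℕ := univ.sup fun p : Fin d × Fin t => #(S.tableSuppliers p.1 p.2)

noncomputable def meetDinner (i : Fin s) (k : Fin c) : Fin d := (S.meetOnce i k).exists.choose

theorem exists_meetDinner (i : Fin s) (k : Fin c) :
    ∃ tb, S.supSeat (S.meetDinner i k) i = some tb ∧ S.cusSeat (S.meetDinner i k) k = some tb :=
  (S.meetOnce i k).exists.choose_spec

theorem supSeat_meetDinner {i : Fin s} {k : Fin c} {tb : Fin t}
    (h : S.cusSeat (S.meetDinner i k) k = some tb) : S.supSeat (S.meetDinner i k) i = some tb := by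
  obtain ⟨tb', hi, hk⟩ := S.exists_meetDinner i k
  rwa [← Option.some_injective _ (hk.symm.trans h)]

theorem isSome_cusSeat_meetDinner (i : Fin s) (k : Fin c) :
    (S.cusSeat (S.meetDinner i k) k).isSome := by
  obtain ⟨tb, -, hk⟩ := S.exists_meetDinner i k
  simp [hk]

theorem card_cusSeat_isSome_le (e : Fin d) : #{k | (S.cusSeat e k).isSome} ≤ t * γ :=
  calc #{k | (S.cusSeat e k).isSome}
      = #(univ.biUnion fun tb : Fin t => {k | S.cusSeat e k = some tb}) := by
        congr 1; ext k; simp [Option.isSome_iff_exists]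
    _ ≤ ∑ tb : Fin t, #{k | S.cusSeat e k = some tb} := card_biUnion_le
    _ ≤ ∑ _tb : Fin t, γ := sum_le_sum fun tb _ => S.cusCap e tb
    _ = t * γ := by simp

theorem sum_attendance_le : ∑ k, S.attendance k ≤ d * (t * γ) :=
  calc ∑ k, S.attendance k = ∑ e, #{k | (S.cusSeat e k).isSome} := by
        simp only [attendance, card_filter]; exact sum_comm
    _ ≤ ∑ _e : Fin d, t * γ := sum_le_sum fun e _ => S.card_cusSeat_isSome_le e
    _ = d * (t * γ) := by simp

theorem card_le_attendance_mul_maxTableSize (k : Fin c) :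
    s ≤ S.attendance k * S.maxTableSize := by
  have hfiber : ∀ e ∈ ({e | (S.cusSeat e k).isSome} : Finset (Fin d)),
      #{i | S.meetDinner i k = e} ≤ S.maxTableSize := by
    intro e he
    obtain ⟨tb, htb⟩ := Option.isSome_iff_exists.1 (mem_filter.1 he).2
    calc #{i | S.meetDinner i k = e} ≤ #(S.tableSuppliers e tb) := by
          refine card_le_card fun i hi => ?_
          simp only [mem_filter, mem_univ, true_and, tableSuppliers] at hi ⊢
          subst hi
          exact S.supSeat_meetDinner htb
      _ ≤ S.maxTableSize :=
          le_sup (f := fun p : Fin d × Fin t => #(S.tableSuppliers p.1 p.2)) (mem_univ (e, tb))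
  simpa [attendance, mul_comm] using card_le_mul_card_image_of_maps_to
    (fun i _ => mem_filter.2 ⟨mem_univ _, S.isSome_cusSeat_meetDinner i k⟩) _ hfiber

theorem card_tableSuppliers_le_attendance {e : Fin d} {tb : Fin t} {k : Fin c}
    (hk : S.cusSeat e k ≠ some tb) : #(S.tableSuppliers e tb) ≤ S.attendance k := by
  refine card_le_card_of_injOn (S.meetDinner · k)
    (fun i _ => mem_filter.2 ⟨mem_univ _, S.isSome_cusSeat_meetDinner i k⟩) ?_
  intro i hi j hj hij
  by_contra hne
  simp only [tableSuppliers, coe_filter, mem_univ, true_and, Set.mem_ofPred_eq] at hi hj hij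
  obtain ⟨tb', hit, hkt⟩ := S.exists_meetDinner i k
  have hjt : S.supSeat (S.meetDinner i k) j = some tb' := hij ▸ S.supSeat_meetDinner (hij ▸ hkt)
  -- `i` and `j` share a table at `e` and at their meeting dinner with `k`, and these differ
  have hdiff : S.meetDinner i k ≠ e := by
    intro h
    rw [h] at hit hkt
    exact hk (Option.some_injective _ (hit.symm.trans hi) ▸ hkt)
  have hle := S.supPairOnce i j hne
  have hlt : 1 < #{e' | ∃ tb, S.supSeat e' i = some tb ∧ S.supSeat e' j = some tb} :=
    one_lt_card.2
      ⟨_, by simpa using ⟨tb', hit, hjt⟩, e, by simpa using ⟨tb, hi, hj⟩, hdiff⟩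
  omega

theorem exists_card_tableSuppliers_eq_maxTableSize (hs : 0 < s) (hc : 0 < c) :
    ∃ e tb, #(S.tableSuppliers e tb) = S.maxTableSize := by
  obtain ⟨tb, -⟩ := S.exists_meetDinner ⟨0, hs⟩ ⟨0, hc⟩
  obtain ⟨⟨e, tb⟩, -, h⟩ :=
    exists_mem_eq_sup univ ⟨(S.meetDinner ⟨0, hs⟩ ⟨0, hc⟩, tb), mem_univ _⟩
      fun p : Fin d × Fin t => #(S.tableSuppliers p.1 p.2)
  exact ⟨e, tb, h.symm⟩

theorem maxTableSize_pos (hs : 0 < s) (hc : 0 < c) : 0 < S.maxTableSize := by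
  have := S.card_le_attendance_mul_maxTableSize ⟨0, hc⟩
  exact Nat.pos_of_ne_zero fun h => by simp [h] at this; omega

theorem sub_mul_max_add_mul_le_sum_attendance (hs : 0 < s) (hc : 0 < c) :
    ((c : ℝ) - γ) * max (S.maxTableSize : ℝ) (s / S.maxTableSize) +
        γ * (s / S.maxTableSize) ≤
      ∑ k, (S.attendance k : ℝ) := by
  obtain ⟨e, tb, hmax⟩ := S.exists_card_tableSuppliers_eq_maxTableSize hs hc
  have hb : (0 : ℝ) < S.maxTableSize := by exact_mod_cast S.maxTableSize_pos hs hc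
  have hlo : ∀ k, (s : ℝ) / S.maxTableSize ≤ S.attendance k := fun k => by
    rw [div_le_iff₀ hb]; exact_mod_cast S.card_le_attendance_mul_maxTableSize k
  simpa using card_sub_mul_add_mul_le_sum {k | S.cusSeat e k = some tb} _
    (le_max_right _ _) (by exact_mod_cast S.cusCap e tb) hlo fun k hk => max_le
      (by rw [← hmax]; exact_mod_cast S.card_tableSuppliers_le_attendance (by simpa using hk))
      (hlo k)

end BDSchedule

open Real in
theorem business_dinner_lb_four_general (t s c σ γ d : ℕ)
    (hcγ : γ < c)
    (h : Nonempty (BDSchedule t s c σ γ d)) :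
    (⌈Real.sqrt s / ((t : ℝ) * γ) *
        (((c : ℝ) - γ) * max (Real.sqrt ((γ : ℝ) / ((c : ℝ) - γ))) 1 +
          (γ : ℝ) / max (Real.sqrt ((γ : ℝ) / ((c : ℝ) - γ))) 1)⌉ : ℤ) ≤ (d : ℤ) := by
  obtain ⟨S⟩ := h
  rcases Nat.eq_zero_or_pos s with rfl | hs
  · simp
  have hc : 0 < c := by omega
  have hx : (0 : ℝ) < c - γ := by rw [sub_pos]; exact_mod_cast hcγ
  have key := mul_mul_max_sqrt_add_div_le hx (Nat.cast_nonneg γ) (sqrt_pos.2 (Nat.cast_pos.2 hs))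
    (Nat.cast_pos.2 (S.maxTableSize_pos hs hc))
  rw [sq_sqrt (Nat.cast_nonneg s)] at key
  have hsum : ∑ k, (S.attendance k : ℝ) ≤ d * (t * γ) := by
    exact_mod_cast S.sum_attendance_le
  rw [Int.ceil_le, div_mul_eq_mul_div]
  push_cast
  exact div_le_of_le_mul₀ (by positivity) (by positivity)
    (key.trans ((S.sub_mul_max_add_mul_le_sum_attendance hs hc).trans hsum))

open Real in
/-- Lower bound `lb₄`: if `c > γ` then the number of dinners is at least
`⌈(√s/(tγ))·((c-γ)·max(√(γ/(c-γ)),1) + γ/max(√(γ/(c-γ)),1))⌉`. -/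
theorem business_dinner_lb_four (t s c σ γ d : ℕ)
    (ht : 1 ≤ t) (hσ : 1 ≤ σ) (hγ : 1 ≤ γ) (hcγ : γ < c)
    (h : Nonempty (BDSchedule t s c σ γ d)) :
    (⌈Real.sqrt s / ((t : ℝ) * γ) *
        (((c : ℝ) - γ) * max (Real.sqrt ((γ : ℝ) / ((c : ℝ) - γ))) 1 +
          (γ : ℝ) / max (Real.sqrt ((γ : ℝ) / ((c : ℝ) - γ))) 1)⌉ : ℤ) ≤ (d : ℤ) :=
  business_dinner_lb_four_general t s c σ γ d hcγ h
end

section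
/- For real c,s,γ with c > γ > 0 and s > 0, define ℓ(z) = max( cs/z, min_{1≤x≤γ} ((c−x)z + xs/z) ) for z > 0. Then the infimum of ℓ over z > 0 equals (c−γ)·M + sγ/M, where M = max(√(sγ/(c−γ)), √s). -/
/-!
For `z ≥ √s` the inner function `x ↦ (c - x) z + x s / z` is affine with slope `s / z - z ≤ 0`,
so its minimum over `[1, γ]` is `h z := (c - γ) z + sγ / z`. The function `h` decreases up to
`√(sγ / (c - γ))` and increases afterwards, so on `[√s, ∞)` it is smallest at `M`, which is where
the infimum is attained: there `cs / M ≤ h M` because `M ≥ √s`. For `z ≤ √s` the first term of the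
maximum already gives `cs / z ≥ c √s = h √s ≥ h M`.
-/

open Real Set

section MulAddDiv

variable {a b m z : ℝ}

lemma mul_add_div_sub_mul_add_div (hm : m ≠ 0) (hz : z ≠ 0) :
    (a * z + b / z) - (a * m + b / m) = (z - m) * (a * m * z - b) / (m * z) := by
  field_simp
  ring

lemma mul_add_div_le_of_le_mul_sq (ha : 0 ≤ a) (hm : 0 < m) (hb : b ≤ a * m ^ 2) (hmz : m ≤ z) :
    a * m + b / m ≤ a * z + b / z := by
  have hz : 0 < z := hm.trans_le hmz
  rw [← sub_nonneg, mul_add_div_sub_mul_add_div hm.ne' hz.ne']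
  have : b ≤ a * m * z := by nlinarith [mul_le_mul_of_nonneg_left hmz (mul_nonneg ha hm.le)]
  exact div_nonneg (mul_nonneg (sub_nonneg.2 hmz) (sub_nonneg.2 this)) (by positivity)

lemma mul_add_div_le_of_mul_sq_eq (ha : 0 ≤ a) (hm : 0 < m) (hb : a * m ^ 2 = b) (hz : 0 < z) :
    a * m + b / m ≤ a * z + b / z := by
  rw [← sub_nonneg, mul_add_div_sub_mul_add_div hm.ne' hz.ne', ← hb]
  have : (z - m) * (a * m * z - a * m ^ 2) = a * m * (z - m) ^ 2 := by ring
  rw [this]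
  positivity

/-- `z ↦ a z + b / z` is minimal at `√(b / a)` and increasing beyond it. -/
lemma mul_add_div_max_sqrt_le {t : ℝ} (ha : 0 < a) (hb : 0 ≤ b) (ht : 0 < t) (htz : t ≤ z) :
    a * max (√(b / a)) t + b / max (√(b / a)) t ≤ a * z + b / z := by
  have hba : 0 ≤ b / a := div_nonneg hb ha.le
  rcases max_cases (√(b / a)) t with ⟨hM, hle⟩ | ⟨hM, hlt⟩
  · rw [hM]
    refine mul_add_div_le_of_mul_sq_eq ha.le (ht.trans_le hle) ?_ (ht.trans_le htz)
    rw [sq_sqrt hba, mul_div_cancel₀ _ ha.ne']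
  · rw [hM]
    refine mul_add_div_le_of_le_mul_sq ha.le ht ?_ htz
    have : b / a ≤ t ^ 2 := (sqrt_le_left ht.le).1 hlt.le
    rwa [div_le_iff₀ ha, mul_comm] at this

end MulAddDiv

lemma antitone_sub_mul_add_mul_div {c s z : ℝ} (hz : 0 < z) (hsz : s ≤ z ^ 2) :
    Antitone fun x : ℝ => (c - x) * z + x * s / z := by
  intro x y hxy
  have hslope : s / z ≤ z := by rw [div_le_iff₀ hz]; nlinarith
  simp only [mul_div_assoc]
  nlinarith [mul_nonneg (sub_nonneg.2 hxy) (sub_nonneg.2 hslope)]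

lemma sInf_image_Icc_sub_mul_add_mul_div {c s z p q : ℝ} (hpq : p ≤ q) (hz : 0 < z)
    (hsz : s ≤ z ^ 2) :
    sInf ((fun x : ℝ => (c - x) * z + x * s / z) '' Icc p q) = (c - q) * z + q * s / z :=
  (antitone_sub_mul_add_mul_div hz hsz).antitoneOn _ |>.sInf_image_Icc hpq

/-- For reals `c > γ ≥ 1` and `s > 0`, the infimum over `z > 0` of
`ℓ(z) = max(cs/z, min_{1 ≤ x ≤ γ}((c-x)z + xs/z))` equals `(c-γ)M + sγ/M` where
`M = max(√(sγ/(c-γ)), √s)`. -/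
theorem inf_counting_function (c s γ : ℝ) (hs : 0 < s) (hγ : 1 ≤ γ) (hcγ : γ < c) :
    IsGLB
      ((fun z : ℝ => max (c * s / z)
          (sInf ((fun x : ℝ => (c - x) * z + x * s / z) '' Set.Icc 1 γ))) '' Set.Ioi 0)
      ((c - γ) * max (Real.sqrt (s * γ / (c - γ))) (Real.sqrt s) +
        s * γ / max (Real.sqrt (s * γ / (c - γ))) (Real.sqrt s)) := by
  set M := max (√(s * γ / (c - γ))) (√s)
  have hcγ' : 0 < c - γ := sub_pos.2 hcγ
  have hsqrt : 0 < √s := sqrt_pos.2 hs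
  have hM : √s ≤ M := le_max_right _ _
  have hsM : s ≤ M ^ 2 := (sqrt_le_left (hsqrt.le.trans hM)).1 hM
  have h_min : ∀ z, √s ≤ z → (c - γ) * M + s * γ / M ≤ (c - γ) * z + s * γ / z :=
    fun z hz => mul_add_div_max_sqrt_le hcγ' (by positivity) hsqrt hz
  have h_inner : ∀ z, √s ≤ z →
      sInf ((fun x : ℝ => (c - x) * z + x * s / z) '' Icc 1 γ) = (c - γ) * z + s * γ / z :=
    fun z hz => by
      rw [sInf_image_Icc_sub_mul_add_mul_div hγ (hsqrt.trans_le hz)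
        ((sqrt_le_left (hsqrt.le.trans hz)).1 hz), mul_comm γ s]
  have h_outer_M : c * s / M ≤ (c - γ) * M + s * γ / M := by
    rw [← sub_nonneg]
    have : (c - γ) * M + s * γ / M - c * s / M = (c - γ) * (M ^ 2 - s) / M := by
      field_simp
      ring
    rw [this]
    exact div_nonneg (mul_nonneg hcγ'.le (sub_nonneg.2 hsM)) (hsqrt.le.trans hM)
  refine IsLeast.isGLB ⟨⟨M, hsqrt.trans_le hM, ?_⟩, ?_⟩
  · simp only [h_inner M hM, max_eq_right h_outer_M]
  rintro _ ⟨z, hz, rfl⟩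
  rcases le_total z (√s) with hzs | hzs
  · refine le_max_of_le_left ?_
    calc (c - γ) * M + s * γ / M ≤ (c - γ) * √s + s * γ / √s := h_min _ le_rfl
      _ = c * s / √s := by field_simp; rw [sq_sqrt hs.le]; ring
      _ ≤ c * s / z := div_le_div_of_nonneg_left (by nlinarith) hz hzs
  · exact le_max_of_le_right ((h_min z hzs).trans_eq (h_inner z hzs).symm)
end

section
/- The linear program: minimize (1/t)·Σ_{i=1}^{s} Σ_{j=1}^{σ} (1/j)·x_{i,j} subject to Σ_j x_{i,j} ≥ ⌈c/γ⌉ for all i, Σ_j (j−1)x_{i,j} ≤ s−1 for all i, and x_{i,j} ≥ 0, has optimal value (s/t)·max( (1/σ)⌈c/γ⌉, max_{2≤j≤σ} ( (2/j)⌈c/γ⌉ − (s−1)/(j(j−1)) ) ). -/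
/-!
The program splits into `s` identical independent rows, so it suffices to solve one row:
minimize `∑ y_j / (j+1)` over `y ≥ 0` with `∑ y_j ≥ K` and `∑ (j-1) y_j ≤ S`.
Its dual is to maximize `a K - b S` over `a, b ≥ 0` with `a - b (j-1) ≤ 1/j` for all `j ≤ σ`.
The pairs `(1/σ, 0)` and `(2/p, 1/(p(p-1)))` for `2 ≤ p ≤ σ` are dual feasible, the latter because
`p (p-1) - (2p-1-j) j = (p-j)(p-j-1) ≥ 0` for integers `j, p`, and give the terms of the maximum.
Conversely, if `(σ-1) K ≤ S` the point mass `K` at `j = σ` is feasible with cost `K/σ`, and otherwise,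
with `q = ⌊S/K⌋`, the row spread over `j = q+1, q+2` that makes both constraints tight costs
exactly the `p = q+2` term.
-/

open Finset

theorem Fintype.sum_mul_pi_single {ι R : Type*} [Fintype ι] [DecidableEq ι]
    [NonUnitalNonAssocSemiring R] (w : ι → R) (i : ι) (a : R) :
    ∑ j, w j * (Pi.single i a : ι → R) j = w i * a := by
  simp_rw [← Pi.single_mul_right_apply, Fintype.sum_pi_single']

theorem isLeast_mul_sum_of_isLeast {α ι : Type*} [Fintype ι] {P : α → Prop} {f : α → ℝ}
    {m r : ℝ} (h : IsLeast {v | ∃ y, P y ∧ v = f y} m) (hr : 0 ≤ r) :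
    IsLeast {v | ∃ x : ι → α, (∀ i, P (x i)) ∧ v = r * ∑ i, f (x i)}
      (r * (Fintype.card ι * m)) := by
  obtain ⟨⟨y, hy, rfl⟩, hmin⟩ := h
  refine ⟨⟨fun _ => y, fun _ => hy, by simp⟩, ?_⟩
  rintro _ ⟨x, hx, rfl⟩
  gcongr
  calc (Fintype.card ι : ℝ) * f y = ∑ _i : ι, f y := by simp
    _ ≤ ∑ i, f (x i) := sum_le_sum fun i _ => hmin ⟨x i, hx i, rfl⟩

theorem two_div_sub_mul_le_one_div_succ {p m : ℕ} (hp : 2 ≤ p) :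
    2 / (p : ℝ) - 1 / (p * (p - 1)) * m ≤ 1 / (m + 1) := by
  have hconsec : (0 : ℤ) ≤ ((p : ℤ) - m - 1) * (p - m - 2) := by
    rcases le_or_gt ((p : ℤ) - m - 1) 0 with h | h <;> nlinarith
  have hconsec' : (0 : ℝ) ≤ ((p : ℝ) - m - 1) * (p - m - 2) := by exact_mod_cast hconsec
  have hp' : (2 : ℝ) ≤ p := by exact_mod_cast hp
  have hp0 : (0 : ℝ) < p * (p - 1) := by nlinarith
  have hp1 : (p : ℝ) - 1 ≠ 0 := by linarith
  rw [show 2 / (p : ℝ) - 1 / (p * (p - 1)) * m = (2 * (p - 1) - m) / (p * (p - 1)) by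
    field_simp, div_le_div_iff₀ hp0 (by positivity)]
  nlinarith

noncomputable section Row

variable {σ : ℕ} {K S : ℝ}

def RowFeasible (K S : ℝ) (y : Fin σ → ℝ) : Prop :=
  (∀ j, 0 ≤ y j) ∧ K ≤ ∑ j, y j ∧ ∑ j : Fin σ, ((j : ℕ) : ℝ) * y j ≤ S

def rowCost (y : Fin σ → ℝ) : ℝ :=
  ∑ j : Fin σ, (1 / (((j : ℕ) : ℝ) + 1)) * y j

def dualValue (K S : ℝ) (p : ℕ) : ℝ :=
  2 / (p : ℝ) * K - S / ((p : ℝ) * ((p : ℝ) - 1))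

def rowLPValue (K S : ℝ) (σ : ℕ) (hσ : 2 ≤ σ) : ℝ :=
  max (1 / (σ : ℝ) * K) ((Icc 2 σ).sup' (nonempty_Icc.2 hσ) (dualValue K S))

theorem sub_le_rowCost_of_dual {a b : ℝ} {y : Fin σ → ℝ} (hy : RowFeasible K S y)
    (ha : 0 ≤ a) (hb : 0 ≤ b) (hab : ∀ j : Fin σ, a - b * (j : ℕ) ≤ 1 / ((j : ℕ) + 1)) :
    a * K - b * S ≤ rowCost y := by
  obtain ⟨hy0, hK, hS⟩ := hy
  calc a * K - b * S ≤ a * ∑ j, y j - b * ∑ j : Fin σ, ((j : ℕ) : ℝ) * y j := by gcongr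
    _ = ∑ j : Fin σ, (a - b * (j : ℕ)) * y j := by
      rw [mul_sum, mul_sum, ← sum_sub_distrib]
      exact sum_congr rfl fun j _ => by ring
    _ ≤ rowCost y := sum_le_sum fun j _ => mul_le_mul_of_nonneg_right (hab j) (hy0 j)

theorem rowLPValue_le_rowCost (hσ : 2 ≤ σ) {y : Fin σ → ℝ} (hy : RowFeasible K S y) :
    rowLPValue K S σ hσ ≤ rowCost y := by
  refine max_le ?_ (sup'_le _ _ fun p hp => ?_)
  · have hdual : ∀ j : Fin σ, 1 / (σ : ℝ) - 0 * (j : ℕ) ≤ 1 / ((j : ℕ) + 1) := fun j => by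
      rw [zero_mul, sub_zero]
      gcongr
      exact_mod_cast j.isLt
    simpa using sub_le_rowCost_of_dual hy (by positivity) le_rfl hdual
  · have hp : 2 ≤ p := (mem_Icc.1 hp).1
    have hp' : (2 : ℝ) ≤ p := by exact_mod_cast hp
    have h := sub_le_rowCost_of_dual hy (a := 2 / p) (b := 1 / (p * (p - 1)))
      (by positivity) (one_div_nonneg.2 (by nlinarith))
      fun _ => two_div_sub_mul_le_one_div_succ hp
    rwa [one_div_mul_eq_div] at h

theorem exists_rowFeasible_rowCost_eq_of_slack (hσ : 1 ≤ σ) (hK : 0 ≤ K)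
    (hslack : ((σ : ℝ) - 1) * K ≤ S) :
    ∃ y : Fin σ → ℝ, RowFeasible K S y ∧ rowCost y = 1 / (σ : ℝ) * K := by
  obtain ⟨n, rfl⟩ : ∃ n, σ = n + 1 := ⟨σ - 1, by omega⟩
  refine ⟨Pi.single (Fin.last n) K, ⟨fun j => ?_, ?_, ?_⟩, ?_⟩
  · by_cases h : j = Fin.last n <;> simp [h, hK]
  · simp
  · rw [Fintype.sum_mul_pi_single]
    simpa using hslack
  · rw [rowCost, Fintype.sum_mul_pi_single]
    simp

theorem exists_rowFeasible_rowCost_eq_dualValue (q : ℕ) (hq : q + 1 < σ)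
    (hlow : (q : ℝ) * K ≤ S) (hhigh : S ≤ ((q : ℝ) + 1) * K) :
    ∃ y : Fin σ → ℝ, RowFeasible K S y ∧ rowCost y = dualValue K S (q + 2) := by
  let y : Fin σ → ℝ :=
    Pi.single ⟨q, by omega⟩ (((q : ℝ) + 1) * K - S) + Pi.single ⟨q + 1, hq⟩ (S - q * K)
  have hsum (w : Fin σ → ℝ) : ∑ j, w j * y j
      = w ⟨q, by omega⟩ * (((q : ℝ) + 1) * K - S) + w ⟨q + 1, hq⟩ * (S - q * K) := by
    simp only [y, Pi.add_apply, mul_add, sum_add_distrib, Fintype.sum_mul_pi_single]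
  refine ⟨y, ⟨fun j => ?_, ?_, ?_⟩, ?_⟩
  · simp only [y, Pi.add_apply, Pi.single_apply]
    split_ifs <;> linarith
  · have h := hsum fun _ => 1
    simp only [one_mul] at h
    linarith
  · rw [hsum]
    push_cast
    linarith
  · rw [rowCost, hsum, dualValue]
    push_cast
    rw [show (q : ℝ) + 2 - 1 = q + 1 by ring]
    field_simp
    ring

theorem isLeast_rowCost (hσ : 2 ≤ σ) (hK : 0 ≤ K) (hS : 0 ≤ S) :
    IsLeast {v | ∃ y : Fin σ → ℝ, RowFeasible K S y ∧ v = rowCost y} (rowLPValue K S σ hσ) := by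
  refine ⟨?_, by rintro _ ⟨y, hy, rfl⟩; exact rowLPValue_le_rowCost hσ hy⟩
  suffices ∃ y : Fin σ → ℝ, RowFeasible K S y ∧ rowCost y ≤ rowLPValue K S σ hσ by
    obtain ⟨y, hy, hle⟩ := this
    exact ⟨y, hy, (hle.antisymm (rowLPValue_le_rowCost hσ hy)).symm⟩
  by_cases hslack : ((σ : ℝ) - 1) * K ≤ S
  · obtain ⟨y, hy, hcost⟩ := exists_rowFeasible_rowCost_eq_of_slack (by omega) hK hslack
    exact ⟨y, hy, hcost.trans_le (le_max_left _ _)⟩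
  push Not at hslack
  have hσ' : (2 : ℝ) ≤ σ := by exact_mod_cast hσ
  have hKpos : 0 < K := by
    by_contra! hK0
    nlinarith
  set q := ⌊S / K⌋₊
  have hq : (q : ℝ) ≤ S / K := Nat.floor_le (div_nonneg hS hKpos.le)
  have hq' : S / K < q + 1 := Nat.lt_floor_add_one _
  have hqσ : q + 1 < σ := by
    have : (q : ℝ) + 1 < σ := by linarith [(div_lt_iff₀ hKpos).2 hslack]
    exact_mod_cast this
  obtain ⟨y, hy, hcost⟩ := exists_rowFeasible_rowCost_eq_dualValue q hqσ
    ((le_div_iff₀ hKpos).1 hq) ((div_lt_iff₀ hKpos).1 hq').le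
  exact ⟨y, hy, hcost.trans_le <|
    (le_sup' _ (mem_Icc.2 ⟨by omega, by omega⟩)).trans (le_max_right _ _)⟩

end Row

theorem supplier_lp_value_general (s c t σ γ : ℕ)
    (hs : 1 ≤ s) (hσ : 2 ≤ σ) :
    IsLeast
      {v : ℝ | ∃ x : Fin s → Fin σ → ℝ, (∀ i j, 0 ≤ x i j) ∧
        (∀ i, ((⌈(c : ℚ) / γ⌉ : ℤ) : ℝ) ≤ ∑ j, x i j) ∧
        (∀ i, ∑ j : Fin σ, ((j : ℕ) : ℝ) * x i j ≤ (s : ℝ) - 1) ∧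
        v = (1 / (t : ℝ)) * ∑ i, ∑ j : Fin σ, (1 / (((j : ℕ) : ℝ) + 1)) * x i j}
      ((s : ℝ) / t *
        max ((1 / (σ : ℝ)) * ((⌈(c : ℚ) / γ⌉ : ℤ) : ℝ))
          ((Finset.Icc 2 σ).sup' (Finset.nonempty_Icc.2 hσ)
            (fun j : ℕ => 2 / (j : ℝ) * ((⌈(c : ℚ) / γ⌉ : ℤ) : ℝ) -
              ((s : ℝ) - 1) / ((j : ℝ) * ((j : ℝ) - 1))))) := by
  have hK : (0 : ℝ) ≤ ((⌈(c : ℚ) / γ⌉ : ℤ) : ℝ) :=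
    Int.cast_nonneg (Int.ceil_nonneg (by positivity))
  have hS : (0 : ℝ) ≤ (s : ℝ) - 1 := sub_nonneg.2 (by exact_mod_cast hs)
  have h := isLeast_mul_sum_of_isLeast (ι := Fin s) (isLeast_rowCost hσ hK hS)
    (one_div_nonneg.2 (Nat.cast_nonneg t))
  rw [Fintype.card_fin, ← mul_assoc, one_div_mul_eq_div] at h
  convert h using 1
  · ext v
    simp only [RowFeasible, rowCost, forall_and, and_assoc]
  · rfl

/-- The linear program over all suppliers: minimize
`(1/t)·Σ_{i=1}^{s} Σ_{j=1}^{σ} (1/j)·x_{i,j}` subject to `Σ_j x_{i,j} ≥ ⌈c/γ⌉`,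
`Σ_j (j-1)·x_{i,j} ≤ s-1` and `x_{i,j} ≥ 0`, has optimal value
`(s/t)·max((1/σ)⌈c/γ⌉, max_{2 ≤ j ≤ σ}((2/j)⌈c/γ⌉ - (s-1)/(j(j-1))))`.
Variable `x i j` for `j : Fin σ` stands for `x_{i,j+1}`. -/
theorem supplier_lp_value (s c t σ γ : ℕ)
    (hs : 1 ≤ s) (hc : 1 ≤ c) (ht : 1 ≤ t) (hσ : 2 ≤ σ) (hγ : 1 ≤ γ) :
    IsLeast
      {v : ℝ | ∃ x : Fin s → Fin σ → ℝ, (∀ i j, 0 ≤ x i j) ∧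
        (∀ i, ((⌈(c : ℚ) / γ⌉ : ℤ) : ℝ) ≤ ∑ j, x i j) ∧
        (∀ i, ∑ j : Fin σ, ((j : ℕ) : ℝ) * x i j ≤ (s : ℝ) - 1) ∧
        v = (1 / (t : ℝ)) * ∑ i, ∑ j : Fin σ, (1 / (((j : ℕ) : ℝ) + 1)) * x i j}
      ((s : ℝ) / t *
        max ((1 / (σ : ℝ)) * ((⌈(c : ℚ) / γ⌉ : ℤ) : ℝ))
          ((Finset.Icc 2 σ).sup' (Finset.nonempty_Icc.2 hσ)
            (fun j : ℕ => 2 / (j : ℝ) * ((⌈(c : ℚ) / γ⌉ : ℤ) : ℝ) -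
              ((s : ℝ) - 1) / ((j : ℝ) * ((j : ℝ) - 1))))) :=
  supplier_lp_value_general s c t σ γ hs hσ
end

section
/- The linear program: minimize Σ_{j=1}^{σ} (1/j)·x_j subject to Σ_{j=1}^{σ} x_j ≥ m, Σ_{j=1}^{σ} (j−1)x_j ≤ s−1, x_j ≥ 0, has optimal value max( m/σ, max_{2≤j≤σ} ( 2m/j − (s−1)/(j(j−1)) ) ). -/
/-! Weak duality gives the lower bound. The pair `(y, z) = (1/σ, 0)` is dual feasible, and so is
`(2/k, 1/(k(k-1)))` for every `2 ≤ k ≤ σ`, because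
`1/(j+1) - 2/k + j/(k(k-1)) = (k-j-1)(k-j-2) / ((j+1)k(k-1))` and a product of two consecutive
integers is nonnegative; their dual values `m·y - t·z` are the terms of the maximum.
The bound is attained: if `m(σ-1) ≤ t`, all the mass `m` on `x_σ` costs `m/σ`; otherwise
`q = ⌊t/m⌋ < σ - 1`, and splitting `m` between `x_{q+1}` and `x_{q+2}` so that the weight
constraint is tight costs exactly the dual value at `k = q + 2`, whose two dual constraints are
tight at those variables. -/

open Finset Matrix

namespace SingleSupplierLP

theorem weak_duality {ι : Type*} [Fintype ι] {c w x : ι → ℝ} {m t y z : ℝ}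
    (hx : 0 ≤ x) (hm : m ≤ ∑ j, x j) (ht : w ⬝ᵥ x ≤ t)
    (hy : 0 ≤ y) (hz : 0 ≤ z) (hdual : ∀ j, y - w j * z ≤ c j) :
    y * m - z * t ≤ c ⬝ᵥ x :=
  calc y * m - z * t ≤ y * ∑ j, x j - z * (w ⬝ᵥ x) := by gcongr
    _ = ∑ j, (y - w j * z) * x j := by
      simp only [dotProduct, mul_sum, ← sum_sub_distrib]
      exact sum_congr rfl fun j _ => by ring
    _ ≤ c ⬝ᵥ x := sum_le_sum fun j _ => mul_le_mul_of_nonneg_right (hdual j) (hx j)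

theorem two_div_sub_le_one_div_add_one (j k : ℕ) (hk : 2 ≤ k) :
    2 / (k : ℝ) - j * (1 / (k * (k - 1))) ≤ 1 / (j + 1) := by
  have hk' : (2 : ℝ) ≤ k := by exact_mod_cast hk
  have consecutive : (0 : ℝ) ≤ (k - j - 1) * (k - j - 2) := by
    rcases le_or_gt (k : ℝ) (j + 1) with h | h
    · nlinarith
    · have : (j : ℝ) + 2 ≤ k := by exact_mod_cast (show j + 2 ≤ k by exact_mod_cast h)
      nlinarith
  have hkk : (0 : ℝ) < k * (k - 1) := by nlinarith
  calc 2 / (k : ℝ) - j * (1 / (k * (k - 1))) = (2 * (k - 1) - j) / (k * (k - 1)) := by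
        field_simp [show (k : ℝ) - 1 ≠ 0 by linarith]
    _ ≤ 1 / (j + 1) := by
      rw [div_le_div_iff₀ hkk (by positivity)]
      nlinarith

variable {σ : ℕ} {m t : ℝ}

def Feasible (m t : ℝ) (x : Fin σ → ℝ) : Prop :=
  0 ≤ x ∧ m ≤ ∑ j, x j ∧ (fun j : Fin σ => ((j : ℕ) : ℝ)) ⬝ᵥ x ≤ t

noncomputable def cost (x : Fin σ → ℝ) : ℝ := (fun j : Fin σ => 1 / (((j : ℕ) : ℝ) + 1)) ⬝ᵥ x

noncomputable def dualValue (m t : ℝ) (k : ℕ) : ℝ := 2 * m / k - t / (k * (k - 1))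

theorem max_le_cost (hσ : 2 ≤ σ) {x : Fin σ → ℝ} (hx : Feasible m t x) :
    max (m / σ) ((Icc 2 σ).sup' (nonempty_Icc.2 hσ) (dualValue m t)) ≤ cost x := by
  obtain ⟨h0, hm, ht⟩ := hx
  refine max_le ?_ (sup'_le _ _ fun k hk => ?_)
  · calc m / σ = 1 / σ * m - 0 * t := by ring
      _ ≤ cost x := weak_duality h0 hm ht (by positivity) le_rfl fun j => by
          rw [mul_zero, sub_zero]
          exact one_div_le_one_div_of_le (by positivity) (by exact_mod_cast j.isLt)
  · have hk2 := (mem_Icc.1 hk).1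
    have hk1 : (1 : ℝ) ≤ k := by exact_mod_cast (by omega : 1 ≤ k)
    calc dualValue m t k = 2 / k * m - 1 / (k * (k - 1)) * t := by unfold dualValue; ring
      _ ≤ cost x := weak_duality h0 hm ht (by positivity)
          (one_div_nonneg.2 (mul_nonneg (by positivity) (by linarith)))
          fun j => two_div_sub_le_one_div_add_one j k hk2

theorem exists_feasible_cost_eq_div (hm : 0 ≤ m) (hσ : 0 < σ) (h : m * (σ - 1) ≤ t) :
    ∃ x : Fin σ → ℝ, Feasible m t x ∧ cost x = m / σ := by
  have hlast : ((σ - 1 : ℕ) : ℝ) = σ - 1 := by rw [Nat.cast_pred hσ]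
  refine ⟨Pi.single ⟨σ - 1, by omega⟩ m, ⟨Pi.single_nonneg.2 hm, ?_, ?_⟩, ?_⟩
  · simp
  · simp only [dotProduct_single, hlast]
    linarith
  · simp only [cost, dotProduct_single, hlast]
    ring

theorem exists_feasible_cost_eq_dualValue_add_two {q : ℕ} (hq : q + 1 < σ)
    (hlo : q * m ≤ t) (hhi : t ≤ (q + 1) * m) :
    ∃ x : Fin σ → ℝ, Feasible m t x ∧ cost x = dualValue m t (q + 2) := by
  refine ⟨Pi.single ⟨q, by omega⟩ ((q + 1) * m - t) + Pi.single ⟨q + 1, hq⟩ (t - q * m),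
    ⟨?_, ?_, ?_⟩, ?_⟩
  · exact add_nonneg (Pi.single_nonneg.2 (by linarith)) (Pi.single_nonneg.2 (by linarith))
  · simp [sum_add_distrib]
    linarith
  · simp only [dotProduct_add, dotProduct_single]
    push_cast
    linarith
  · simp only [cost, dualValue, dotProduct_add, dotProduct_single]
    push_cast
    rw [show (q : ℝ) + 2 - 1 = q + 1 by ring]
    field_simp
    ring

theorem exists_feasible_cost_eq_dualValue (hm : 0 ≤ m) (ht : 0 ≤ t) (h : t < m * (σ - 1)) :
    ∃ k ∈ Icc 2 σ, ∃ x : Fin σ → ℝ, Feasible m t x ∧ cost x = dualValue m t k := by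
  have hm_pos : 0 < m := hm.lt_of_ne fun hm0 => by simp [← hm0] at h; linarith
  set q := ⌊t / m⌋₊
  have hq : (q : ℝ) ≤ t / m := Nat.floor_le (by positivity)
  have hq' : t / m < q + 1 := Nat.lt_floor_add_one _
  have hqσ : (q : ℝ) + 1 < σ := by linarith [(div_lt_iff₀' hm_pos).2 h]
  refine ⟨q + 2, mem_Icc.2 ⟨by omega, by exact_mod_cast hqσ⟩,
    exists_feasible_cost_eq_dualValue_add_two (by exact_mod_cast hqσ) ?_ ?_⟩
  · rwa [le_div_iff₀ hm_pos] at hq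
  · exact ((div_lt_iff₀ hm_pos).1 hq').le

theorem exists_feasible_cost_le_max (hm : 0 ≤ m) (ht : 0 ≤ t) (hσ : 2 ≤ σ) :
    ∃ x : Fin σ → ℝ, Feasible m t x ∧
      cost x ≤ max (m / σ) ((Icc 2 σ).sup' (nonempty_Icc.2 hσ) (dualValue m t)) := by
  rcases le_or_gt (m * (σ - 1)) t with h | h
  · obtain ⟨x, hx, hcost⟩ := exists_feasible_cost_eq_div hm (by omega) h
    exact ⟨x, hx, hcost.trans_le (le_max_left _ _)⟩
  · obtain ⟨k, hk, x, hx, hcost⟩ := exists_feasible_cost_eq_dualValue hm ht h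
    exact ⟨x, hx, hcost.trans_le ((le_sup' _ hk).trans (le_max_right _ _))⟩

end SingleSupplierLP

open SingleSupplierLP

theorem single_supplier_lp_value_general (m s σ : ℕ) (hs : 1 ≤ s) (hσ : 2 ≤ σ) :
    IsLeast
      {v : ℝ | ∃ x : Fin σ → ℝ, (∀ j, 0 ≤ x j) ∧
        ((m : ℝ) ≤ ∑ j, x j) ∧
        (∑ j : Fin σ, ((j : ℕ) : ℝ) * x j ≤ (s : ℝ) - 1) ∧
        v = ∑ j : Fin σ, (1 / (((j : ℕ) : ℝ) + 1)) * x j}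
      (max ((m : ℝ) / σ)
        ((Finset.Icc 2 σ).sup' (Finset.nonempty_Icc.2 hσ)
          (fun j : ℕ => 2 * (m : ℝ) / j - ((s : ℝ) - 1) / ((j : ℝ) * ((j : ℝ) - 1))))) := by
  have ht : (0 : ℝ) ≤ s - 1 := sub_nonneg.2 (Nat.one_le_cast.2 hs)
  obtain ⟨x, hx, hcost⟩ := exists_feasible_cost_le_max m.cast_nonneg ht hσ
  refine ⟨⟨x, hx.1, hx.2.1, hx.2.2, le_antisymm (max_le_cost hσ hx) hcost⟩, ?_⟩
  rintro v ⟨y, h0, h1, h2, rfl⟩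
  exact max_le_cost hσ ⟨h0, h1, h2⟩

/-- The single-supplier linear program: minimize `Σ_{j=1}^{σ} (1/j)·x_j` subject to
`Σ_j x_j ≥ m`, `Σ_j (j-1)·x_j ≤ s-1`, `x_j ≥ 0`, has optimal value
`max(m/σ, max_{2 ≤ j ≤ σ}(2m/j - (s-1)/(j(j-1))))`.
Variable `x j` for `j : Fin σ` stands for `x_{j+1}`. -/
theorem single_supplier_lp_value (m s σ : ℕ) (hm : 1 ≤ m) (hs : 1 ≤ s) (hσ : 2 ≤ σ) :
    IsLeast
      {v : ℝ | ∃ x : Fin σ → ℝ, (∀ j, 0 ≤ x j) ∧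
        ((m : ℝ) ≤ ∑ j, x j) ∧
        (∑ j : Fin σ, ((j : ℕ) : ℝ) * x j ≤ (s : ℝ) - 1) ∧
        v = ∑ j : Fin σ, (1 / (((j : ℕ) : ℝ) + 1)) * x j}
      (max ((m : ℝ) / σ)
        ((Finset.Icc 2 σ).sup' (Finset.nonempty_Icc.2 hσ)
          (fun j : ℕ => 2 * (m : ℝ) / j - ((s : ℝ) - 1) / ((j : ℝ) * ((j : ℝ) - 1))))) :=
  single_supplier_lp_value_general m s σ hs hσ
end

section
/- If c ≤ γ, the optimal number of dinners for the Business Dinner Problem equals ⌈s/σ⌉. -/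
open Finset

lemma ceil_div_toNat_le_iff {σ : ℕ} (hσ : 0 < σ) (s d : ℕ) :
    ⌈(s : ℚ) / σ⌉.toNat ≤ d ↔ s ≤ σ * d := by
  rw [Int.toNat_le, Int.ceil_le, div_le_iff₀ (by exact_mod_cast hσ), mul_comm]
  exact_mod_cast Iff.rfl

lemma card_filter_div_eq_le {s σ : ℕ} (hσ : 0 < σ) (e : ℕ) :
    #{i : Fin s | (i : ℕ) / σ = e} ≤ σ := by
  calc #{i : Fin s | (i : ℕ) / σ = e}
      ≤ #(Ico (e * σ) (e * σ + σ)) := card_le_card_of_injOn Fin.val (fun i hi => by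
        simp only [coe_filter, mem_univ, true_and, Set.mem_ofPred_eq, Nat.div_eq_iff hσ] at hi
        simp only [coe_Ico, Set.mem_Ico]
        omega) Fin.val_injective.injOn
    _ = σ := by simp

namespace BDSchedule

variable {t s c σ γ d : ℕ}

lemma card_meet_at_le (S : BDSchedule t s c σ γ d) (k : Fin c) (e : Fin d) :
    #{i | ∃ tb, S.supSeat e i = some tb ∧ S.cusSeat e k = some tb} ≤ σ := by
  cases hk : S.cusSeat e k with
  | none => simp
  | some tb =>
    refine le_trans (card_le_card fun i hi => ?_) (S.supCap e tb)
    simp only [Option.some_inj, mem_filter, mem_univ, true_and] at hi ⊢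
    obtain ⟨tb', hi, rfl⟩ := hi
    exact hi

lemma suppliers_le_mul_dinners (S : BDSchedule t s c σ γ d) (k : Fin c) : s ≤ σ * d := by
  choose f hf using fun i => (S.meetOnce i k).exists
  have hfiber (e : Fin d) : #{i | f i = e} ≤ σ :=
    le_trans (card_le_card fun i hi => by
      simp only [mem_filter, mem_univ, true_and] at hi ⊢
      exact hi ▸ hf i) (S.card_meet_at_le k e)
  simpa using card_le_mul_card_image_of_maps_to (s := univ) (t := univ) (f := f)
    (fun _ _ => mem_univ _) σ (fun e _ => hfiber e)

def oneTable (tb : Fin t) (hσ : 0 < σ) (hcγ : c ≤ γ) (hs : s ≤ σ * d) :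
    BDSchedule t s c σ γ d where
  supSeat e i := if (i : ℕ) / σ = e then some tb else none
  cusSeat _ _ := some tb
  supCap e tb' := le_trans (card_le_card fun i hi => by
      simp only [Option.ite_none_right_eq_some, mem_filter, mem_univ, true_and] at hi ⊢
      exact hi.1) (card_filter_div_eq_le hσ e)
  cusCap _ _ := le_trans (card_le_univ _) (by simpa using hcγ)
  meetOnce i _ := by
    have hi : (i : ℕ) / σ < d := Nat.div_lt_of_lt_mul (i.isLt.trans_le hs)
    refine ⟨⟨_, hi⟩, ⟨tb, by simp⟩, fun e ⟨_, he, _⟩ => Fin.ext ?_⟩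
    simp only [Option.ite_none_right_eq_some] at he
    exact he.1.symm
  supPairOnce i _ _ := card_le_one.mpr fun e he e' he' => by
    simp only [Option.ite_none_right_eq_some, mem_filter, mem_univ, true_and] at he he'
    obtain ⟨_, ⟨he, _⟩, _⟩ := he
    obtain ⟨_, ⟨he', _⟩, _⟩ := he'
    exact Fin.ext (he ▸ he')

end BDSchedule

theorem business_dinner_c_le_gamma_general (t s c σ γ : ℕ)
    (ht : 1 ≤ t) (hσ : 1 ≤ σ) (hc : 1 ≤ c) (hcγ : c ≤ γ) :
    IsLeast {d : ℕ | Nonempty (BDSchedule t s c σ γ d)} (⌈(s : ℚ) / σ⌉.toNat) := by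
  refine ⟨⟨BDSchedule.oneTable ⟨0, ht⟩ hσ hcγ ?_⟩, fun d ⟨S⟩ => ?_⟩
  · exact (ceil_div_toNat_le_iff hσ s _).mp le_rfl
  · exact (ceil_div_toNat_le_iff hσ s d).mpr (S.suppliers_le_mul_dinners ⟨0, hc⟩)

/-- If `c ≤ γ`, the optimal number of dinners is `⌈s/σ⌉`. -/
theorem business_dinner_c_le_gamma (t s c σ γ : ℕ)
    (ht : 1 ≤ t) (hσ : 1 ≤ σ) (hγ : 1 ≤ γ) (hc : 1 ≤ c) (hcγ : c ≤ γ) :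
    IsLeast {d : ℕ | Nonempty (BDSchedule t s c σ γ d)} (⌈(s : ℚ) / σ⌉.toNat) :=
  business_dinner_c_le_gamma_general t s c σ γ ht hσ hc hcγ
end

section
/- Every Howell design H(m, 2n) yields a feasible schedule of the Business Dinner Problem with s = 2n suppliers, σ = 2, t ≥ n tables, and ⌈c/γ⌉ = m customer groups, using exactly m dinners. -/
/-- A Howell design `H(m, 2n)`: an `m × m` array whose cells are empty or contain
an unordered pair of distinct symbols from a set of `2n` symbols, such that every
symbol occurs exactly once in each row and in each column, and every pair occurs
at most once in the array. -/
structure HowellDesign (m n : ℕ) where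
  cell : Fin m → Fin m → Option (Sym2 (Fin (2 * n)))
  notDiag : ∀ r c e, cell r c = some e → ¬ e.IsDiag
  rowOnce : ∀ (r : Fin m) (x : Fin (2 * n)),
    ∃! col : Fin m, ∃ e, cell r col = some e ∧ x ∈ e
  colOnce : ∀ (col : Fin m) (x : Fin (2 * n)),
    ∃! r : Fin m, ∃ e, cell r col = some e ∧ x ∈ e
  pairOnce : ∀ (r₁ c₁ r₂ c₂ : Fin m) (e : Sym2 (Fin (2 * n))),
    cell r₁ c₁ = some e → cell r₂ c₂ = some e → r₁ = r₂ ∧ c₁ = c₂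

/-!
Dinner `r` is row `r` of the Howell design, and each customer group is a column. Since every
symbol occurs once in row `r`, that row has exactly `n` filled cells, which are seated at `n ≤ t`
distinct tables: the two suppliers of a cell sit at its table, together with the customers of the
cell's column. A supplier `x` then meets the group of column `col` exactly at the dinner of the
row in which `x` appears in column `col`, and two suppliers share a table at most at the dinner
of the unique cell containing their pair.
-/

open Finset

theorem Nat.le_mul_of_ceil_div_eq {c γ m : ℕ} (hγ : 0 < γ) (h : ⌈(c : ℚ) / γ⌉ = (m : ℤ)) :
    c ≤ m * γ := by
  have hdiv : (c : ℚ) / γ ≤ m := by exact_mod_cast Int.ceil_le.mp h.le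
  exact_mod_cast (div_le_iff₀ (by exact_mod_cast hγ)).mp hdiv

theorem Fin.exists_fiber_card_le {c m γ : ℕ} (h : c ≤ m * γ) :
    ∃ g : Fin c → Fin m, ∀ q, #{k | g k = q} ≤ γ := by
  let pos : Fin c → Fin m × Fin γ := fun k => finProdFinEquiv.symm (Fin.castLE h k)
  have pos_inj : Function.Injective pos :=
    finProdFinEquiv.symm.injective.comp (Fin.castLE_injective h)
  refine ⟨fun k => (pos k).1, fun q => ?_⟩
  calc #{k | (pos k).1 = q} ≤ #(univ : Finset (Fin γ)) :=
        card_le_card_of_injOn (fun k => (pos k).2) (fun _ _ => mem_univ _)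
          fun k hk k' hk' h =>
            pos_inj (Prod.ext ((mem_filter.1 hk).2.trans (mem_filter.1 hk').2.symm) h)
    _ = γ := by simp

theorem Finset.exists_partial_injection_fin {α : Type*} [DecidableEq α] (s : Finset α) {t : ℕ}
    (hs : #s ≤ t) : ∃ f : α → Option (Fin t),
      ∀ a b, (∃ tb, f a = some tb ∧ f b = some tb) ↔ a = b ∧ a ∈ s := by
  obtain ⟨emb⟩ :=
    Function.Embedding.nonempty_of_card_le (α := s) (β := Fin t) (by simpa using hs)
  refine ⟨fun a => if h : a ∈ s then some (emb ⟨a, h⟩) else none, fun a b => ?_⟩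
  constructor
  · rintro ⟨tb, ha, hb⟩
    dsimp only at ha hb
    split_ifs at ha hb with has hbs
    have := emb.injective (Option.some.inj (ha.trans hb.symm))
    exact ⟨congrArg Subtype.val this, has⟩
  · rintro ⟨rfl, ha⟩
    exact ⟨_, dif_pos ha, dif_pos ha⟩

theorem Finset.card_filter_comp_eq_some_le {α β γ : Type*} [Fintype α] [DecidableEq β]
    [DecidableEq γ] {g : β → Option γ}
    (hg : ∀ b b', (∃ c, g b = some c ∧ g b' = some c) → b = b') (f : α → β) {k : ℕ}
    (hf : ∀ b, #{a | f a = b} ≤ k) (c : γ) : #{a | g (f a) = some c} ≤ k := by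
  by_cases hc : ∃ b, g b = some c
  · obtain ⟨b, hb⟩ := hc
    refine (card_le_card fun a ha => ?_).trans (hf b)
    simp only [mem_filter, mem_univ, true_and] at ha ⊢
    exact hg _ _ ⟨c, ha, hb⟩
  · push Not at hc
    simp [hc]

namespace HowellDesign

variable {m n : ℕ} (H : HowellDesign m n)

noncomputable def colOf (r : Fin m) (x : Fin (2 * n)) : Fin m :=
  (H.rowOnce r x).exists.choose

theorem colOf_eq_iff {r col : Fin m} {x : Fin (2 * n)} :
    H.colOf r x = col ↔ ∃ p, H.cell r col = some p ∧ x ∈ p :=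
  ⟨fun h => h ▸ (H.rowOnce r x).exists.choose_spec,
    (H.rowOnce r x).unique (H.rowOnce r x).exists.choose_spec⟩

theorem exists_cell_colOf (r : Fin m) (x : Fin (2 * n)) :
    ∃ p, H.cell r (H.colOf r x) = some p ∧ x ∈ p :=
  H.colOf_eq_iff.1 rfl

def filledCols (r : Fin m) : Finset (Fin m) :=
  {col | (H.cell r col).isSome}

theorem colOf_mem_filledCols (r : Fin m) (x : Fin (2 * n)) : H.colOf r x ∈ H.filledCols r := by
  obtain ⟨p, hp, -⟩ := H.exists_cell_colOf r x
  simp [filledCols, hp]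

theorem filter_colOf_eq {r col : Fin m} {a b : Fin (2 * n)} (h : H.cell r col = some s(a, b)) :
    ({x | H.colOf r x = col} : Finset (Fin (2 * n))) = {a, b} := by
  ext x
  simp only [mem_filter, mem_univ, true_and, colOf_eq_iff, h, Option.some.injEq, exists_eq_left',
    Sym2.mem_iff, mem_insert, mem_singleton]

theorem card_filter_colOf_eq {r col : Fin m} (hcol : col ∈ H.filledCols r) :
    #{x | H.colOf r x = col} = 2 := by
  obtain ⟨p, hp⟩ := Option.isSome_iff_exists.1 (mem_filter.1 hcol).2
  induction p using Sym2.ind with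
  | _ a b =>
    rw [H.filter_colOf_eq hp, card_pair]
    exact fun hab => H.notDiag r col _ hp (Sym2.mk_isDiag_iff.2 hab)

theorem card_filter_colOf_eq_le (r col : Fin m) : #{x | H.colOf r x = col} ≤ 2 := by
  by_cases hcol : col ∈ H.filledCols r
  · exact (H.card_filter_colOf_eq hcol).le
  · have hempty : ({x | H.colOf r x = col} : Finset (Fin (2 * n))) = ∅ :=
      filter_eq_empty_iff.2 fun x _ hx => hcol (hx ▸ H.colOf_mem_filledCols r x)
    simp [hempty]

theorem card_filledCols (r : Fin m) : #(H.filledCols r) = n := by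
  have hsum := card_eq_sum_card_fiberwise (s := univ) (t := H.filledCols r)
    fun x _ => H.colOf_mem_filledCols r x
  rw [sum_congr rfl fun col hcol => H.card_filter_colOf_eq hcol, sum_const, smul_eq_mul,
    card_univ, Fintype.card_fin] at hsum
  omega

theorem cell_colOf_of_colOf_eq {r : Fin m} {x y : Fin (2 * n)} (hxy : x ≠ y)
    (h : H.colOf r x = H.colOf r y) : H.cell r (H.colOf r x) = some s(x, y) := by
  obtain ⟨p, hp, hxp⟩ := H.exists_cell_colOf r x
  obtain ⟨q, hq, hyq⟩ := H.exists_cell_colOf r y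
  rw [← h, hp, Option.some.injEq] at hq
  rwa [← (Sym2.mem_and_mem_iff hxy).1 ⟨hxp, hq ▸ hyq⟩]

theorem card_filter_colOf_eq_colOf_le_one {x y : Fin (2 * n)} (hxy : x ≠ y) :
    #{r | H.colOf r x = H.colOf r y} ≤ 1 := by
  refine card_le_one.2 fun r₁ h₁ r₂ h₂ => ?_
  simp only [mem_filter, mem_univ, true_and] at h₁ h₂
  exact (H.pairOnce _ _ _ _ _ (H.cell_colOf_of_colOf_eq hxy h₁)
    (H.cell_colOf_of_colOf_eq hxy h₂)).1

end HowellDesign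

theorem howell_gives_schedule_general (m n t c γ : ℕ) (H : HowellDesign m n)
    (ht : n ≤ t) (hγ : 1 ≤ γ) (hm : (⌈(c : ℚ) / γ⌉ : ℤ) = (m : ℤ)) :
    Nonempty (BDSchedule t (2 * n) c 2 γ m) := by
  obtain ⟨group, hgroup⟩ := Fin.exists_fiber_card_le (Nat.le_mul_of_ceil_div_eq hγ hm)
  choose seat hseat using fun r =>
    (H.filledCols r).exists_partial_injection_fin ((H.card_filledCols r).trans_le ht)
  have seat_inj r b b' (h : ∃ tb, seat r b = some tb ∧ seat r b' = some tb) : b = b' :=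
    ((hseat r b b').1 h).1
  refine ⟨{
    supSeat := fun r x => seat r (H.colOf r x)
    cusSeat := fun r k => seat r (group k)
    supCap := fun r => card_filter_comp_eq_some_le (seat_inj r) _ (H.card_filter_colOf_eq_le r)
    cusCap := fun r => card_filter_comp_eq_some_le (seat_inj r) _ hgroup
    meetOnce := fun x k => ?_
    supPairOnce := fun x y hxy => ?_ }⟩
  · simp only [hseat, H.colOf_mem_filledCols, and_true, H.colOf_eq_iff]
    exact H.colOnce (group k) x
  · simp only [hseat, H.colOf_mem_filledCols, and_true]
    exact H.card_filter_colOf_eq_colOf_le_one hxy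

/-- Every Howell design `H(m, 2n)` yields a feasible schedule of the Business
Dinner Problem with `s = 2n` suppliers, `σ = 2`, `t ≥ n` tables and
`m = ⌈c/γ⌉` customer groups, using exactly `m` dinners. -/
theorem howell_gives_schedule (m n t c γ : ℕ) (H : HowellDesign m n)
    (ht : n ≤ t) (hγ : 1 ≤ γ) (hc : 1 ≤ c) (hm : (⌈(c : ℚ) / γ⌉ : ℤ) = (m : ℤ)) :
    Nonempty (BDSchedule t (2 * n) c 2 γ m) :=
  howell_gives_schedule_general m n t c γ H ht hγ hm
end

section
/- Let p be prime, s = p², and for k ∈ {1,…,c} with c ≤ p define the p×p matrices M^{(k)} by M^{(k)}_{i,j} = j + p(kj − j − k + i) mod p². Then: (a) each M^{(k)} contains all residues modulo p² exactly once; (b) for distinct k, k' and rows i, i', the sets of entries of row i of M^{(k)} and row i' of M^{(k')} share at most one common residue modulo p². -/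
/-- The matrices `M⁽ᵏ⁾` with `M⁽ᵏ⁾_{i,j} = j + p(kj - j - k + i) mod p²`:
(a) each `M⁽ᵏ⁾` contains every residue mod `p²` exactly once;
(b) any row of `M⁽ᵏ⁾` and any row of `M⁽ᵏ'⁾` with `k ≠ k'` share at most one
common residue mod `p²`. -/
theorem prime_square_matrices (p c : ℕ) (hp : p.Prime) (hc : 1 ≤ c) (hcp : c ≤ p) :
    (∀ k ∈ Finset.Icc 1 c, ∀ r : ZMod (p ^ 2),
      ∃! ij : Fin p × Fin p,
        ((((ij.2 : ℕ) + 1 : ℤ) + (p : ℤ) *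
          ((k : ℤ) * ((ij.2 : ℕ) + 1) - ((ij.2 : ℕ) + 1) - k + ((ij.1 : ℕ) + 1)) : ℤ) :
            ZMod (p ^ 2)) = r) ∧
    (∀ k ∈ Finset.Icc 1 c, ∀ k' ∈ Finset.Icc 1 c, k ≠ k' →
      ∀ i ∈ Finset.Icc 1 p, ∀ i' ∈ Finset.Icc 1 p,
        (((Finset.Icc 1 p).image fun j : ℕ =>
            (((j : ℤ) + (p : ℤ) * ((k : ℤ) * j - j - k + i) : ℤ) : ZMod (p ^ 2))) ∩
          ((Finset.Icc 1 p).image fun j : ℕ =>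
            (((j : ℤ) + (p : ℤ) * ((k' : ℤ) * j - j - k' + i') : ℤ) : ZMod (p ^ 2)))).card
          ≤ 1) := by
  have hppos : 0 < p := hp.pos
  have hpz : (0:ℤ) < (p:ℤ) := by exact_mod_cast hppos
  -- bounded elements congruent mod p are equal
  have bdd : ∀ a b : ℤ, 1 ≤ a → a ≤ p → 1 ≤ b → b ≤ p → (p:ℤ) ∣ a - b → a = b := by
    intro a b ha1 hap hb1 hbp hd
    have h0 : a - b = 0 := Int.eq_zero_of_abs_lt_dvd hd (by rw [abs_sub_lt_iff]; omega)
    omega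
  -- key lemma: equality of entries mod p² forces equal columns and a mod-p relation
  have key : ∀ (k k' i i' j j' : ℤ), 1 ≤ j → j ≤ p → 1 ≤ j' → j' ≤ p →
      (((j + p*(k*j - j - k + i) : ℤ) : ZMod (p^2)) =
       ((j' + p*(k'*j' - j' - k' + i') : ℤ) : ZMod (p^2))) →
      j = j' ∧ (p:ℤ) ∣ (k*j - j - k + i) - (k'*j' - j' - k' + i') := by
    intro k k' i i' j j' hj1 hjp hj'1 hj'p h
    rw [ZMod.intCast_eq_intCast_iff] at h
    have hd : ((p:ℤ))^2 ∣ (j' + p*(k'*j' - j' - k' + i')) - (j + p*(k*j - j - k + i)) := by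
      have := Int.ModEq.dvd h
      push_cast at this
      exact this
    have hpp : (p:ℤ) ∣ (p:ℤ)^2 := dvd_pow_self _ two_ne_zero
    have h1 : (p:ℤ) ∣ j' - j := by
      have h2 : j' - j = ((j' + p*(k'*j' - j' - k' + i')) - (j + p*(k*j - j - k + i)))
          - (p:ℤ)*((k'*j' - j' - k' + i') - (k*j - j - k + i)) := by ring
      rw [h2]
      exact (hpp.trans hd).sub (Dvd.intro _ rfl)
    have hjj : j = j' := (bdd j' j hj'1 hj'p hj1 hjp h1).symm
    refine ⟨hjj, ?_⟩
    subst hjj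
    rw [sq] at hd
    have h3 : (p:ℤ) * ((k'*j - j - k' + i') - (k*j - j - k + i)) =
        (j + p*(k'*j - j - k' + i')) - (j + p*(k*j - j - k + i)) := by ring
    have h4 : (p:ℤ)*(p:ℤ) ∣ (p:ℤ) * ((k'*j - j - k' + i') - (k*j - j - k + i)) := by
      rw [h3]; exact hd
    have h5 : (p:ℤ) ∣ (k'*j - j - k' + i') - (k*j - j - k + i) :=
      (mul_dvd_mul_iff_left (ne_of_gt hpz)).mp h4
    exact (dvd_sub_comm).mp h5
  constructor
  · -- part (a)
    intro k hk r
    haveI : NeZero (p ^ 2) := ⟨by positivity⟩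
    set g : Fin p × Fin p → ZMod (p^2) := fun ij =>
      ((((ij.2 : ℕ) + 1 : ℤ) + (p : ℤ) *
        ((k : ℤ) * ((ij.2 : ℕ) + 1) - ((ij.2 : ℕ) + 1) - k + ((ij.1 : ℕ) + 1)) : ℤ) :
          ZMod (p ^ 2)) with hg
    have hinj : Function.Injective g := by
      intro a b hab
      have ha2 : ((a.2 : ℕ) : ℤ) + 1 ≤ p := by exact_mod_cast a.2.is_lt
      have hb2 : ((b.2 : ℕ) : ℤ) + 1 ≤ p := by exact_mod_cast b.2.is_lt
      have ha1 : ((a.1 : ℕ) : ℤ) + 1 ≤ p := by exact_mod_cast a.1.is_lt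
      have hb1 : ((b.1 : ℕ) : ℤ) + 1 ≤ p := by exact_mod_cast b.1.is_lt
      obtain ⟨hj, hdvd⟩ := key (k:ℤ) (k:ℤ) (((a.1:ℕ):ℤ)+1) (((b.1:ℕ):ℤ)+1)
        (((a.2:ℕ):ℤ)+1) (((b.2:ℕ):ℤ)+1) (by omega) ha2 (by omega) hb2 hab
      rw [hj] at hdvd
      have hdi : (p:ℤ) ∣ ((((a.1:ℕ):ℤ)+1) - (((b.1:ℕ):ℤ)+1)) := by
        have heq : ((k:ℤ)*((((b.2:ℕ):ℤ))+1) - ((((b.2:ℕ):ℤ))+1) - k + (((a.1:ℕ):ℤ)+1)) -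
            ((k:ℤ)*((((b.2:ℕ):ℤ))+1) - ((((b.2:ℕ):ℤ))+1) - k + (((b.1:ℕ):ℤ)+1)) =
            (((a.1:ℕ):ℤ)+1) - (((b.1:ℕ):ℤ)+1) := by ring
        rw [heq] at hdvd
        exact hdvd
      have hi : ((a.1:ℕ):ℤ) + 1 = ((b.1:ℕ):ℤ) + 1 :=
        bdd _ _ (by omega) ha1 (by omega) hb1 hdi
      have h1 : a.1 = b.1 := by
        apply Fin.ext; exact_mod_cast (by omega : ((a.1:ℕ):ℤ) = ((b.1:ℕ):ℤ))
      have h2 : a.2 = b.2 := by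
        apply Fin.ext; exact_mod_cast (by omega : ((a.2:ℕ):ℤ) = ((b.2:ℕ):ℤ))
      exact Prod.ext h1 h2
    have hcard : Fintype.card (Fin p × Fin p) = Fintype.card (ZMod (p^2)) := by
      simp [ZMod.card, sq]
    have hbij : Function.Bijective g :=
      (Fintype.bijective_iff_injective_and_card g).mpr ⟨hinj, hcard⟩
    obtain ⟨ij, hij⟩ := hbij.surjective r
    exact ⟨ij, hij, fun y hy => hbij.injective (hy.trans hij.symm)⟩
  · -- part (b)
    intro k hk k' hk' hkk' i hi i' hi'
    rw [Finset.mem_Icc] at hk hk' hi hi'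
    rw [Finset.card_le_one]
    intro x hx y hy
    simp only [Finset.mem_inter, Finset.mem_image, Finset.mem_Icc] at hx hy
    obtain ⟨⟨j₁, hj₁, hx1⟩, ⟨j₁', hj₁', hx2⟩⟩ := hx
    obtain ⟨⟨j₂, hj₂, hy1⟩, ⟨j₂', hj₂', hy2⟩⟩ := hy
    have cast_bdd : ∀ j : ℕ, 1 ≤ j ∧ j ≤ p → (1:ℤ) ≤ (j:ℤ) ∧ (j:ℤ) ≤ (p:ℤ) := by
      intro j hj; exact ⟨by exact_mod_cast hj.1, by exact_mod_cast hj.2⟩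
    obtain ⟨hj₁1, hj₁p⟩ := cast_bdd _ hj₁
    obtain ⟨hj₁'1, hj₁'p⟩ := cast_bdd _ hj₁'
    obtain ⟨hj₂1, hj₂p⟩ := cast_bdd _ hj₂
    obtain ⟨hj₂'1, hj₂'p⟩ := cast_bdd _ hj₂'
    obtain ⟨he1, hd1⟩ := key (k:ℤ) (k':ℤ) (i:ℤ) (i':ℤ) (j₁:ℤ) (j₁':ℤ)
      hj₁1 hj₁p hj₁'1 hj₁'p (hx1.trans hx2.symm)
    obtain ⟨he2, hd2⟩ := key (k:ℤ) (k':ℤ) (i:ℤ) (i':ℤ) (j₂:ℤ) (j₂':ℤ)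
      hj₂1 hj₂p hj₂'1 hj₂'p (hy1.trans hy2.symm)
    rw [← he1] at hd1
    rw [← he2] at hd2
    have hd3 : (p:ℤ) ∣ ((k:ℤ) - k') * ((j₁:ℤ) - (j₂:ℤ)) := by
      have heq : (((k:ℤ)*j₁ - j₁ - k + i) - ((k':ℤ)*j₁ - j₁ - k' + i')) -
          (((k:ℤ)*j₂ - j₂ - k + i) - ((k':ℤ)*j₂ - j₂ - k' + i')) =
          ((k:ℤ) - k') * ((j₁:ℤ) - (j₂:ℤ)) := by ring
      rw [← heq]
      exact hd1.sub hd2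
    have hprime : Prime (p:ℤ) := Nat.prime_iff_prime_int.mp hp
    have hknd : ¬ (p:ℤ) ∣ ((k:ℤ) - k') := by
      intro hdk
      have hne : (k:ℤ) ≠ (k':ℤ) := by exact_mod_cast hkk'
      have h0 : (k:ℤ) - k' = 0 := Int.eq_zero_of_abs_lt_dvd hdk (by
        rw [abs_sub_lt_iff]
        constructor <;> [skip; skip] <;>
        · have h1 : (1:ℤ) ≤ (k:ℤ) := by exact_mod_cast hk.1
          have h2 : (k:ℤ) ≤ c := by exact_mod_cast hk.2
          have h3 : (1:ℤ) ≤ (k':ℤ) := by exact_mod_cast hk'.1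
          have h4 : (k':ℤ) ≤ c := by exact_mod_cast hk'.2
          have h5 : (c:ℤ) ≤ p := by exact_mod_cast hcp
          omega)
      omega
    have hjd : (p:ℤ) ∣ (j₁:ℤ) - (j₂:ℤ) :=
      ((hprime.dvd_mul.mp hd3).resolve_left hknd)
    have hj12 : (j₁:ℤ) = (j₂:ℤ) := bdd _ _ hj₁1 hj₁p hj₂1 hj₂p hjd
    have hj12n : j₁ = j₂ := by exact_mod_cast hj12
    rw [← hx1, ← hy1, hj12n]
end
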